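/- (Duality-gap ball bound for the square loss.) Suppose ᾱ ∈ ℝⁿ maximizes D over ℝⁿ, i.e. D(α) ≤ D(ᾱ) for all α ∈ ℝⁿ. Then for every α ∈ ℝⁿ and every β ∈ ℝᵖ, ‖α − ᾱ‖² ≤ 2·(P(β) − D(α)). -/

import Mathlib

/-!
The dual objective is `D = -½‖·‖² + G` with `G` concave: `Φ(τ)` is the minimum over `b` of the
affine functions `τ b + g(b)`, where `g(b) = λ₁|b| + λ₂b² + λ₀[b ≠ 0]` is the coordinatewise primal
penalty. Hence `D` is 1-strongly concave, and at its maximizer `ᾱ` this gives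
`½‖α - ᾱ‖² ≤ D(ᾱ) - D(α)`. The same minimum description of `Φ` yields weak duality
`D(ᾱ) ≤ P(β)`, which finishes the proof.
-/

open Finset Set Filter Topology

theorem ConcaveOn.finset_sum {𝕜 E β ι : Type*} [Semiring 𝕜] [PartialOrder 𝕜] [AddCommMonoid E]
    [AddCommMonoid β] [PartialOrder β] [IsOrderedAddMonoid β] [SMul 𝕜 E] [Module 𝕜 β]
    [PosSMulMono 𝕜 β] {s : Set E} (hs : Convex 𝕜 s) (t : Finset ι) {f : ι → E → β}
    (hf : ∀ i ∈ t, ConcaveOn 𝕜 s (f i)) : ConcaveOn 𝕜 s fun x => ∑ i ∈ t, f i x := by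
  classical
  induction t using Finset.induction_on with
  | empty => simpa using concaveOn_const 0 hs
  | insert i t hi ih =>
    simp only [Finset.sum_insert hi]
    exact (hf i (mem_insert_self i t)).add (ih fun j hj => hf j (mem_insert_of_mem hj))

theorem ConcaveOn.comp_sum_mul {ι : Type*} [Fintype ι] {f : ℝ → ℝ} (hf : ConcaveOn ℝ univ f)
    (c : ι → ℝ) : ConcaveOn ℝ univ fun α : ι → ℝ => f (∑ i, c i * α i) :=
  hf.comp_linearMap (dotProductBilin ℝ ℝ c)

theorem concaveOn_of_le_of_exists_eq {f g : ℝ → ℝ} (hle : ∀ τ b, f τ ≤ τ * b + g b)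
    (hex : ∀ τ, ∃ b, f τ = τ * b + g b) : ConcaveOn ℝ univ f := by
  refine ⟨convex_univ, fun x _ y _ a c ha hc hac => ?_⟩
  obtain ⟨b, hb⟩ := hex (a • x + c • y)
  have hx := mul_le_mul_of_nonneg_left (hle x b) ha
  have hy := mul_le_mul_of_nonneg_left (hle y b) hc
  rw [hb, smul_eq_mul, smul_eq_mul, smul_eq_mul, smul_eq_mul]
  linear_combination hx + hy + g b * hac

theorem le_of_forall_one_sub_mul_le {S c : ℝ} (h : ∀ t, 0 < t → t < 1 → (1 - t) * S ≤ c) :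
    S ≤ c := by
  have hlim : Tendsto (fun t : ℝ => (1 - t) * S) (𝓝[>] 0) (𝓝 S) := by
    have : Tendsto (fun t : ℝ => (1 - t) * S) (𝓝 0) (𝓝 ((1 - 0) * S)) :=
      ((continuous_const.sub continuous_id).mul continuous_const).tendsto 0
    simpa using this.mono_left nhdsWithin_le_nhds
  exact le_of_tendsto hlim (mem_of_superset (Ioo_mem_nhdsGT one_pos) fun t ht => h t ht.1 ht.2)

theorem sum_sq_sub_le_of_concaveOn_add_half_sum_sq {ι : Type*} [Fintype ι] {f : (ι → ℝ) → ℝ}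
    (hf : ConcaveOn ℝ univ fun α => f α + (1 / 2) * ∑ i, α i ^ 2) {αbar : ι → ℝ}
    (hmax : ∀ α, f α ≤ f αbar) (α : ι → ℝ) :
    ∑ i, (α i - αbar i) ^ 2 ≤ 2 * (f αbar - f α) := by
  refine le_of_forall_one_sub_mul_le fun t ht0 ht1 => ?_
  have hconc := hf.2 (mem_univ α) (mem_univ αbar) ht0.le (sub_nonneg.2 ht1.le) (by ring)
  have hsq : ∑ i, (t • α + (1 - t) • αbar) i ^ 2 = t * ∑ i, α i ^ 2
      + (1 - t) * ∑ i, αbar i ^ 2 - t * (1 - t) * ∑ i, (α i - αbar i) ^ 2 := by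
    simp only [Finset.mul_sum, ← Finset.sum_add_distrib, ← Finset.sum_sub_distrib]
    refine Finset.sum_congr rfl fun i _ => ?_
    simp only [Pi.add_apply, Pi.smul_apply, smul_eq_mul]
    ring
  simp only [smul_eq_mul, hsq] at hconc
  have := hmax (t • α + (1 - t) • αbar)
  refine le_of_mul_le_mul_left ?_ ht0
  linarith

noncomputable section

namespace L0L1L2Regression

def penalty (l0 l1 l2 b : ℝ) : ℝ := l1 * |b| + l2 * b ^ 2 + l0 * if b = 0 then 0 else 1

def phi (l0 l1 l2 τ : ℝ) : ℝ :=
  if 2 * √(l0 * l2) + l1 < |τ| then l0 - (|τ| - l1) ^ 2 / (4 * l2) else 0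

variable {ι κ : Type*} [Fintype ι] [Fintype κ]

def primal (l0 l1 l2 : ℝ) (X : Matrix ι κ ℝ) (y : ι → ℝ) (β : κ → ℝ) : ℝ :=
  (1 / 2) * ∑ i, (y i - ∑ j, X i j * β j) ^ 2 + ∑ j, penalty l0 l1 l2 (β j)

def dual (l0 l1 l2 : ℝ) (X : Matrix ι κ ℝ) (y : ι → ℝ) (α : ι → ℝ) : ℝ :=
  -(1 / 2) * ∑ i, α i ^ 2 - ∑ i, y i * α i + ∑ j, phi l0 l1 l2 (∑ i, X i j * α i)

variable {l0 l1 l2 : ℝ}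

theorem phi_le_mul_add_penalty (hl0 : 0 ≤ l0) (hl2 : 0 < l2) (τ b : ℝ) :
    phi l0 l1 l2 τ ≤ τ * b + penalty l0 l1 l2 b := by
  have hs : √(l0 * l2) ^ 2 = l0 * l2 := Real.sq_sqrt (by positivity)
  have hs0 : 0 ≤ √(l0 * l2) := Real.sqrt_nonneg _
  have hτb : -(|τ| * |b|) ≤ τ * b := by rw [← abs_mul]; exact neg_abs_le _
  unfold phi penalty
  split_ifs with hτ hb hb
  · subst hb
    have : l0 * (4 * l2) ≤ (|τ| - l1) ^ 2 := by nlinarith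
    have : l0 ≤ (|τ| - l1) ^ 2 / (4 * l2) := by rw [le_div_iff₀ (by positivity)]; linarith
    simp only [mul_zero, abs_zero, zero_add]
    linarith
  · -- AM-GM: `(|τ| - λ₁)|b| ≤ λ₂ b² + (|τ| - λ₁)² / (4λ₂)`
    have : (|τ| - l1) * |b| - l2 * |b| ^ 2 ≤ (|τ| - l1) ^ 2 / (4 * l2) := by
      rw [le_div_iff₀ (by positivity)]
      nlinarith [sq_nonneg (2 * l2 * |b| - (|τ| - l1))]
    rw [← sq_abs b]
    nlinarith
  · subst hb
    simp
  · -- `λ₂ b² + λ₀ ≥ 2 √(λ₀λ₂) |b| ≥ (|τ| - λ₁) |b|`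
    have : 0 ≤ l2 * (l2 * |b| ^ 2 - 2 * √(l0 * l2) * |b| + l0) := by
      nlinarith [sq_nonneg (l2 * |b| - √(l0 * l2))]
    have : 0 ≤ l2 * |b| ^ 2 - 2 * √(l0 * l2) * |b| + l0 := nonneg_of_mul_nonneg_right this hl2
    have : 0 ≤ (2 * √(l0 * l2) + l1 - |τ|) * |b| := mul_nonneg (by linarith) (abs_nonneg b)
    rw [← sq_abs b]
    nlinarith

theorem exists_phi_eq_mul_add_penalty (hl2 : 0 < l2) (τ : ℝ) :
    ∃ b, phi l0 l1 l2 τ = τ * b + penalty l0 l1 l2 b := by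
  unfold phi
  split_ifs with hτ
  · -- the minimizer is `b = -sign(τ) (|τ| - λ₁) / (2λ₂)`, which is nonzero
    have hc : 0 < (|τ| - l1) / (2 * l2) :=
      div_pos (by linarith [Real.sqrt_nonneg (l0 * l2)]) (by positivity)
    rcases le_or_gt 0 τ with hτ0 | hτ0
    · refine ⟨-((|τ| - l1) / (2 * l2)), ?_⟩
      rw [penalty, if_neg (neg_ne_zero.2 hc.ne'), abs_neg, abs_of_pos hc, abs_of_nonneg hτ0]
      field_simp
      ring
    · refine ⟨(|τ| - l1) / (2 * l2), ?_⟩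
      rw [penalty, if_neg hc.ne', abs_of_pos hc, abs_of_neg hτ0]
      field_simp
      ring
  · exact ⟨0, by simp [penalty]⟩

theorem concaveOn_phi (hl0 : 0 ≤ l0) (hl2 : 0 < l2) : ConcaveOn ℝ univ (phi l0 l1 l2) :=
  concaveOn_of_le_of_exists_eq (phi_le_mul_add_penalty hl0 hl2)
    (exists_phi_eq_mul_add_penalty hl2)

theorem primal_eq (X : Matrix ι κ ℝ) (y : ι → ℝ) (β : κ → ℝ) [DecidablePred fun j => β j ≠ 0] :
    primal l0 l1 l2 X y β = (1 / 2) * (∑ i, (y i - ∑ j, X i j * β j) ^ 2)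
      + l1 * (∑ j, |β j|) + l2 * (∑ j, (β j) ^ 2)
      + l0 * ((Finset.univ.filter fun j => β j ≠ 0).card : ℝ) := by
  simp only [primal, penalty, Finset.sum_add_distrib, ← Finset.mul_sum, Finset.card_filter]
  push_cast
  have hcount : ∑ j, (if β j ≠ 0 then (1 : ℝ) else 0) = ∑ j, if β j = 0 then 0 else 1 :=
    sum_congr rfl fun j _ => by by_cases h : β j = 0 <;> simp [h]
  rw [hcount]
  ring

theorem dual_le_primal (hl0 : 0 ≤ l0) (hl2 : 0 < l2) (X : Matrix ι κ ℝ) (y : ι → ℝ) (α : ι → ℝ)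
    (β : κ → ℝ) : dual l0 l1 l2 X y α ≤ primal l0 l1 l2 X y β := by
  have hphi : ∑ j, phi l0 l1 l2 (∑ i, X i j * α i)
      ≤ ∑ j, ((∑ i, X i j * α i) * β j + penalty l0 l1 l2 (β j)) :=
    sum_le_sum fun j _ => phi_le_mul_add_penalty hl0 hl2 _ _
  have hswap : ∑ j, (∑ i, X i j * α i) * β j = ∑ i, α i * ∑ j, X i j * β j := by
    simp only [Finset.sum_mul, Finset.mul_sum]
    rw [Finset.sum_comm]
    exact sum_congr rfl fun i _ => sum_congr rfl fun j _ => by ring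
  have hsq : ∑ i, (y i - ∑ j, X i j * β j + α i) ^ 2 = ∑ i, ((y i - ∑ j, X i j * β j) ^ 2
      + α i ^ 2 + 2 * (y i * α i) - 2 * (α i * ∑ j, X i j * β j)) :=
    sum_congr rfl fun i _ => by ring
  rw [sum_sub_distrib, sum_add_distrib, sum_add_distrib, ← mul_sum, ← mul_sum] at hsq
  have hnonneg : 0 ≤ ∑ i, (y i - ∑ j, X i j * β j + α i) ^ 2 :=
    sum_nonneg fun i _ => sq_nonneg _
  rw [sum_add_distrib, hswap] at hphi
  rw [dual, primal]
  linarith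

theorem concaveOn_dual_add_half_sum_sq (hl0 : 0 ≤ l0) (hl2 : 0 < l2) (X : Matrix ι κ ℝ)
    (y : ι → ℝ) : ConcaveOn ℝ univ fun α => dual l0 l1 l2 X y α + (1 / 2) * ∑ i, α i ^ 2 := by
  have h := ((convexOn_id convex_univ).neg.comp_sum_mul y).add
    (ConcaveOn.finset_sum convex_univ univ fun j _ =>
      (concaveOn_phi (l1 := l1) hl0 hl2).comp_sum_mul fun i => X i j)
  refine h.congr fun α _ => ?_
  simp only [Pi.add_apply, Pi.neg_apply, id, dual]
  ring

end L0L1L2Regression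

end

open scoped Classical

open L0L1L2Regression in
theorem statement_12_general (l0 l1 l2 : ℝ) (hl0 : 0 < l0) (hl2 : 0 < l2)
    (n p : ℕ) (X : Matrix (Fin n) (Fin p) ℝ) (y : Fin n → ℝ)
    (Φ : ℝ → ℝ)
    (hΦ : ∀ t : ℝ, Φ t =
      if 2 * Real.sqrt (l0 * l2) + l1 < |t| then l0 - (|t| - l1) ^ 2 / (4 * l2)
      else 0)
    (P : (Fin p → ℝ) → ℝ)
    (hP : ∀ β : Fin p → ℝ, P β =
      (1 / 2) * (∑ i, (y i - ∑ j, X i j * β j) ^ 2)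
        + l1 * (∑ j, |β j|) + l2 * (∑ j, (β j) ^ 2)
        + l0 * ((Finset.univ.filter fun j => β j ≠ 0).card : ℝ))
    (D : (Fin n → ℝ) → ℝ)
    (hD : ∀ α : Fin n → ℝ, D α =
      -(1 / 2) * (∑ i, (α i) ^ 2) - (∑ i, y i * α i)
        + ∑ j, Φ (∑ i, X i j * α i))
    (αbar : Fin n → ℝ)
    (hmax : ∀ α : Fin n → ℝ, D α ≤ D αbar) :
    ∀ (α : Fin n → ℝ) (β : Fin p → ℝ),
      (∑ i, (α i - αbar i) ^ 2) ≤ 2 * (P β - D α) := by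
  intro α β
  have hD' : D = dual l0 l1 l2 X y := funext fun α => by simp only [hD, hΦ, dual, phi]
  have hP' : P β = primal l0 l1 l2 X y β := by rw [hP, primal_eq]
  subst hD'
  have hgap := sum_sq_sub_le_of_concaveOn_add_half_sum_sq
    (concaveOn_dual_add_half_sum_sq hl0.le hl2 X y) hmax α
  linarith [dual_le_primal (l1 := l1) hl0.le hl2 X y αbar β]

/-- (Duality-gap ball bound.) If ᾱ maximizes D over ℝⁿ, then for
every α ∈ ℝⁿ and β ∈ ℝᵖ, ‖α − ᾱ‖² ≤ 2·(P(β) − D(α)). -/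
theorem statement_12 (l0 l1 l2 : ℝ) (hl0 : 0 < l0) (hl1 : 0 < l1) (hl2 : 0 < l2)
    (n p : ℕ) (X : Matrix (Fin n) (Fin p) ℝ) (y : Fin n → ℝ)
    (Φ : ℝ → ℝ)
    (hΦ : ∀ t : ℝ, Φ t =
      if 2 * Real.sqrt (l0 * l2) + l1 < |t| then l0 - (|t| - l1) ^ 2 / (4 * l2)
      else 0)
    (P : (Fin p → ℝ) → ℝ)
    (hP : ∀ β : Fin p → ℝ, P β =
      (1 / 2) * (∑ i, (y i - ∑ j, X i j * β j) ^ 2)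
        + l1 * (∑ j, |β j|) + l2 * (∑ j, (β j) ^ 2)
        + l0 * ((Finset.univ.filter fun j => β j ≠ 0).card : ℝ))
    (D : (Fin n → ℝ) → ℝ)
    (hD : ∀ α : Fin n → ℝ, D α =
      -(1 / 2) * (∑ i, (α i) ^ 2) - (∑ i, y i * α i)
        + ∑ j, Φ (∑ i, X i j * α i))
    (αbar : Fin n → ℝ)
    (hmax : ∀ α : Fin n → ℝ, D α ≤ D αbar) :
    ∀ (α : Fin n → ℝ) (β : Fin p → ℝ),
      (∑ i, (α i - αbar i) ^ 2) ≤ 2 * (P β - D α) :=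
  statement_12_general l0 l1 l2 hl0 hl2 n p X y Φ hΦ P hP D hD αbar hmax
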